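/- arXiv:2406.06188 — 2 statements merged into one kernel-verified Lean document; each statement's English description precedes it below -/
import Mathlib

section
/- (Croft–Kingman lemma) Let f : [0,\infty) \to \mathbb{R} be right-continuous. If for every t > 0 the sequence f(nt) tends to 0 as n \to \infty (n ranging over positive integers), then f(t) \to 0 as t \to \infty. -/
/-!
If `f` does not tend to `L`, it leaves some closed neighbourhood `s` of `L` at arbitrarily
large times, and right-continuity makes the open set `V = interior (f ⁻¹' sᶜ)` unbounded above.
For `0 < c < d` the dilates `(n c, n d)` overlap once `n` is large, so their union contains a
half-line and meets `V`: some multiple of some point of `(c, d)` lies in `V`. Hence the open sets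
`{t | ∃ n, n t ∈ V ∩ (k, ∞)} ∪ (-∞, 1)` are dense, and by Baire's theorem a single `t > 1` has
infinitely many multiples `n t` in `V`, contradicting `f (n t) → L`.
-/

open Filter Set Topology

lemma exists_nat_mul_lt_lt {c d y : ℝ} (hc : 0 < c) (hcd : c < d) (hy : d ^ 2 / (d - c) ≤ y) :
    ∃ n : ℕ, n * c < y ∧ y < n * d := by
  have hdc : 0 < d - c := sub_pos.2 hcd
  have hd : 0 < d := hc.trans hcd
  have hy' : d ^ 2 ≤ y * (d - c) := (div_le_iff₀ hdc).1 hy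
  have hy0 : 0 ≤ y := (div_nonneg (sq_nonneg d) hdc.le).trans hy
  set m := ⌊y / d⌋₊
  have hmd : m * d ≤ y := (le_div_iff₀ hd).1 (Nat.floor_le (div_nonneg hy0 hd.le))
  have hmd' : y < (m + 1) * d := (div_lt_iff₀ hd).1 (Nat.lt_floor_add_one (y / d))
  -- `(m + 1) (d - c) > (y / d) (d - c) ≥ d`, so `(m + 1) c < m d ≤ y`
  have hwidth : d < (m + 1) * (d - c) := by
    have : d * d < d * ((m + 1) * (d - c)) := by nlinarith
    exact lt_of_mul_lt_mul_left this hd.le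
  exact ⟨m + 1, by push_cast; nlinarith, by push_cast; exact hmd'⟩

lemma exists_mem_Ioo_nat_mul_mem {V : Set ℝ} (hV : ∀ x, ∃ y ∈ V, x < y) {c d : ℝ}
    (hc : 0 < c) (hcd : c < d) : ∃ t ∈ Ioo c d, ∃ n : ℕ, n * t ∈ V := by
  obtain ⟨y, hyV, hy⟩ := hV (d ^ 2 / (d - c))
  obtain ⟨n, hnc, hnd⟩ := exists_nat_mul_lt_lt hc hcd hy.le
  have hy0 : 0 < y := (div_pos (pow_pos (hc.trans hcd) 2) (sub_pos.2 hcd)).trans hy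
  have hn : (0 : ℝ) < n := (mul_pos_iff_of_pos_right (hc.trans hcd)).1 (hy0.trans hnd)
  refine ⟨y / n, ⟨?_, ?_⟩, n, by rwa [mul_div_cancel₀ _ hn.ne']⟩
  · rwa [lt_div_iff₀ hn, mul_comm]
  · rwa [div_lt_iff₀ hn, mul_comm]

lemma dense_iUnion_preimage_nat_mul_union_Iio {V : Set ℝ} (hV : ∀ x, ∃ y ∈ V, x < y) :
    Dense ((⋃ n : ℕ, (fun t : ℝ ↦ n * t) ⁻¹' V) ∪ Iio 1) := by
  refine dense_of_exists_between ?_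
  intro a b hab
  rcases lt_or_ge a 1 with ha | ha
  · obtain ⟨c, hac, hcb⟩ := exists_between (lt_min hab ha)
    exact ⟨c, Or.inr (hcb.trans_le (min_le_right _ _)), hac, hcb.trans_le (min_le_left _ _)⟩
  · obtain ⟨t, ht, n, hn⟩ := exists_mem_Ioo_nat_mul_mem hV (zero_lt_one.trans_le ha) hab
    exact ⟨t, Or.inl (mem_iUnion.2 ⟨n, hn⟩), ht⟩

lemma exists_pos_frequently_nat_mul_mem {V : Set ℝ} (hVo : IsOpen V)
    (hV : ∀ x, ∃ y ∈ V, x < y) : ∃ t : ℝ, 0 < t ∧ ∃ᶠ n : ℕ in atTop, n * t ∈ V := by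
  set U : ℕ → Set ℝ := fun k ↦ (⋃ n : ℕ, (fun t : ℝ ↦ n * t) ⁻¹' (V ∩ Ioi (k : ℝ))) ∪ Iio 1
  have hUo (k : ℕ) : IsOpen (U k) :=
    (isOpen_iUnion fun n ↦ (hVo.inter isOpen_Ioi).preimage (continuous_const_mul _)).union
      isOpen_Iio
  have hUd (k : ℕ) : Dense (U k) := dense_iUnion_preimage_nat_mul_union_Iio fun x ↦
    let ⟨y, hyV, hy⟩ := hV (max x k)
    ⟨y, ⟨hyV, (le_max_right _ _).trans_lt hy⟩, (le_max_left _ _).trans_lt hy⟩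
  obtain ⟨t, htU, ht1⟩ := (dense_iInter_of_isOpen hUo hUd).exists_mem_open isOpen_Ioi
    (nonempty_Ioi (a := (1 : ℝ)))
  have ht0 : (0 : ℝ) < t := zero_lt_one.trans ht1
  refine ⟨t, ht0, frequently_atTop.2 fun a ↦ ?_⟩
  rcases mem_iInter.1 htU ⌈a * t⌉₊ with htU | htU
  · obtain ⟨n, hnV, hnk⟩ := mem_iUnion.1 htU
    have hna : a * t < n * t := (Nat.le_ceil _).trans_lt hnk
    exact ⟨n, by exact_mod_cast (lt_of_mul_lt_mul_right hna ht0.le).le, hnV⟩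
  · exact (lt_asymm (mem_Ioi.1 ht1) (mem_Iio.1 htU)).elim

lemma ContinuousWithinAt.exists_gt_mem_interior_preimage {α X : Type*} [LinearOrder α]
    [TopologicalSpace α] [OrderTopology α] [DenselyOrdered α] [NoMaxOrder α] [TopologicalSpace X]
    {f : α → X} {s : α} {O : Set X} (hf : ContinuousWithinAt f (Ici s) s) (hO : IsOpen O)
    (hs : f s ∈ O) : ∃ y > s, y ∈ interior (f ⁻¹' O) := by
  obtain ⟨u, hu, hsub⟩ := mem_nhdsGE_iff_exists_Ico_subset.1 (hf (hO.mem_nhds hs))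
  obtain ⟨y, hsy, hyu⟩ := exists_between hu
  exact ⟨y, hsy, mem_interior_iff_mem_nhds.2
    (mem_of_superset (Ioo_mem_nhds hsy hyu) (Ioo_subset_Ico_self.trans hsub))⟩

theorem tendsto_atTop_of_tendsto_nat_mul {X : Type*} [TopologicalSpace X] [RegularSpace X]
    {f : ℝ → X} {L : X} (hf : ∀ x : ℝ, 0 ≤ x → ContinuousWithinAt f (Ici x) x)
    (h : ∀ t : ℝ, 0 < t → Tendsto (fun n : ℕ ↦ f (n * t)) atTop (𝓝 L)) :
    Tendsto f atTop (𝓝 L) := by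
  refine (closed_nhds_basis L).tendsto_right_iff.2 fun s ⟨hs, hsc⟩ ↦ ?_
  by_contra hfreq
  have hV (x : ℝ) : ∃ y ∈ interior (f ⁻¹' sᶜ), x < y := by
    obtain ⟨r, hr, hxr⟩ := ((not_eventually.1 hfreq).and_eventually
      (eventually_ge_atTop (max x 0))).exists
    obtain ⟨y, hry, hy⟩ := (hf r ((le_max_right _ _).trans hxr)).exists_gt_mem_interior_preimage
      hsc.isOpen_compl hr
    exact ⟨y, hy, (le_max_left _ _).trans_lt (hxr.trans_lt hry)⟩
  obtain ⟨t, ht, hfreq_t⟩ := exists_pos_frequently_nat_mul_mem isOpen_interior hV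
  obtain ⟨n, hnV, hns⟩ := (hfreq_t.and_eventually (h t ht hs)).exists
  exact absurd hns (interior_subset hnV)

/-- **Croft–Kingman lemma.** If `f : [0,∞) → ℝ` is right-continuous and for every `t > 0`
the sequence `f (n * t)` tends to `0` as `n → ∞` (over positive integers), then
`f t → 0` as `t → ∞`. -/
theorem croft_kingman (f : ℝ → ℝ)
    (hf : ∀ x : ℝ, 0 ≤ x → ContinuousWithinAt f (Set.Ici x) x)
    (h : ∀ t : ℝ, 0 < t → Tendsto (fun n : ℕ => f (n * t)) atTop (nhds 0)) :
    Tendsto f atTop (nhds 0) :=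
  tendsto_atTop_of_tendsto_nat_mul hf h
end

section
/- Let \Pi be a Lévy measure on (0,\infty) with \int_0^\infty e^{\theta^* x}\Pi(dx) < \infty for some \theta^* > 0, and \lambda > 0. Define the measure \rho on [0,\infty)^2 by \rho(dv,dw) = (\theta^*/\lambda) e^{\theta^* v} \mathbf{1}_{w > 0}\Pi(dw + v)\,dv. Then for all \ell \geq 0, \rho(\{(v,w) : v + w > \ell\}) = \lambda^{-1}\int_\ell^\infty (e^{\theta^* x} - 1)\Pi(dx). -/
open MeasureTheory Real Set
open scoped ENNReal

/-!
Writing `Lev (Ioi v ∩ Ioi ℓ)` as `∫_{x>ℓ} 𝟙_{v<x} Lev(dx)` and exchanging the order of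
integration (Tonelli), the left side becomes `∫_{x>ℓ} (∫_0^x (θ*/λ) e^{θ* v} dv) Lev(dx)`,
and the inner integral is `λ⁻¹ (e^{θ* x} - 1)`.
-/

theorem lintegral_mul_measure_Ioi {α : Type*} [LinearOrder α] [TopologicalSpace α]
    [OrderClosedTopology α] [SecondCountableTopology α] [MeasurableSpace α]
    [OpensMeasurableSpace α] (μ ν : Measure α) [SFinite μ] [SFinite ν]
    {g : α → ℝ≥0∞} (hg : Measurable g) :
    ∫⁻ v, g v * μ (Ioi v) ∂ν = ∫⁻ x, ∫⁻ v in Iio x, g v ∂ν ∂μ := by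
  have hmeas : Measurable fun p : α × α => {q : α × α | q.1 < q.2}.indicator (g ∘ Prod.fst) p :=
    (hg.comp measurable_fst).indicator (measurableSet_lt measurable_fst measurable_snd)
  calc ∫⁻ v, g v * μ (Ioi v) ∂ν
      = ∫⁻ v, ∫⁻ x, {q : α × α | q.1 < q.2}.indicator (g ∘ Prod.fst) (v, x) ∂μ ∂ν := by
        congr! 2 with v
        rw [← lintegral_indicator_const measurableSet_Ioi]
        rfl
    _ = ∫⁻ x, ∫⁻ v, {q : α × α | q.1 < q.2}.indicator (g ∘ Prod.fst) (v, x) ∂ν ∂μ :=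
        lintegral_lintegral_swap hmeas.aemeasurable
    _ = ∫⁻ x, ∫⁻ v in Iio x, g v ∂ν ∂μ := by
        congr! 2 with x
        rw [← lintegral_indicator measurableSet_Iio]
        rfl

theorem lintegral_Ioo_ofReal_mul_exp {θ : ℝ} (hθ : 0 < θ) (x : ℝ) :
    ∫⁻ v in Ioo 0 x, ENNReal.ofReal (θ * exp (θ * v)) = ENNReal.ofReal (exp (θ * x) - 1) := by
  rcases le_or_gt x 0 with hx | hx
  · rw [Ioo_eq_empty hx.not_gt, Measure.restrict_empty, lintegral_zero_measure,
      ENNReal.ofReal_of_nonpos]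
    simpa using mul_nonpos_of_nonneg_of_nonpos hθ.le hx
  have hderiv : ∀ v, HasDerivAt (fun v => exp (θ * v)) (θ * exp (θ * v)) v := fun v => by
    simpa [mul_comm] using ((hasDerivAt_id v).const_mul θ).exp
  have hcont : Continuous fun v => θ * exp (θ * v) := by fun_prop
  rw [← ofReal_integral_eq_lintegral_ofReal
      ((hcont.integrableOn_Icc (a := 0) (b := x)).mono_set Ioo_subset_Icc_self)
      (ae_of_all _ fun v => by positivity),
    ← integral_Ioc_eq_integral_Ioo, ← intervalIntegral.integral_of_le hx.le,
    intervalIntegral.integral_eq_sub_of_hasDerivAt (fun v _ => hderiv v)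
      (hcont.intervalIntegrable _ _)]
  simp

theorem total_jump_law_general
    (Lev : Measure ℝ) [SFinite Lev] (θstar lam : ℝ)
    (hθstar : 0 < θstar)
    (ℓ : ℝ) :
    ∫⁻ v in Set.Ioi (0:ℝ),
        ENNReal.ofReal (θstar / lam * exp (θstar * v)) * Lev (Set.Ioi v ∩ Set.Ioi ℓ)
      = ENNReal.ofReal (1 / lam)
          * ∫⁻ x in Set.Ioi ℓ, ENNReal.ofReal (exp (θstar * x) - 1) ∂Lev := by
  have hfactor : ∀ v, ENNReal.ofReal (θstar / lam * exp (θstar * v))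
      = ENNReal.ofReal (1 / lam) * ENNReal.ofReal (θstar * exp (θstar * v)) := fun v => by
    rw [← ENNReal.ofReal_mul' (by positivity)]
    congr 1
    ring
  calc ∫⁻ v in Ioi 0, ENNReal.ofReal (θstar / lam * exp (θstar * v)) * Lev (Ioi v ∩ Ioi ℓ)
      = ∫⁻ v in Ioi 0, ENNReal.ofReal (θstar / lam * exp (θstar * v))
          * Lev.restrict (Ioi ℓ) (Ioi v) := by
        simp only [Measure.restrict_apply measurableSet_Ioi]
    _ = ∫⁻ x in Ioi ℓ, (∫⁻ v in Ioo 0 x, ENNReal.ofReal (θstar / lam * exp (θstar * v))) ∂Lev := by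
        rw [lintegral_mul_measure_Ioi _ _ (by fun_prop)]
        simp only [Measure.restrict_restrict measurableSet_Iio, Iio_inter_Ioi]
    _ = ENNReal.ofReal (1 / lam)
          * ∫⁻ x in Ioi ℓ, ENNReal.ofReal (exp (θstar * x) - 1) ∂Lev := by
        simp only [hfactor, lintegral_const_mul' _ _ ENNReal.ofReal_ne_top,
          lintegral_Ioo_ofReal_mul_exp hθstar]

/-- **Law of the total jump from the joint undershoot–overshoot law.**
Let `Lev` be a Lévy measure on `(0, ∞)` with `∫ exp (θ* x) Lev(dx) < ∞` for some
`θ* > 0`, and `λ > 0`.  The measure `ρ(dv, dw) = (θ*/λ) e^{θ* v} 𝟙_{w>0} Lev(dw + v) dv`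
on `[0,∞)²` (where `Lev(dw + v)` is the shift of `Lev` by `v`, i.e.
`∫ f(w) Lev(dw+v) = ∫_{x>v} f(x-v) Lev(dx)`, so that
`ρ({(v,w) : v + w > ℓ}) = ∫_{v>0} (θ*/λ) e^{θ* v} Lev(Ioi v ∩ Ioi ℓ) dv`) satisfies, for
every `ℓ ≥ 0`, `ρ({(v,w) : v + w > ℓ}) = λ⁻¹ ∫_ℓ^∞ (exp (θ* x) - 1) Lev(dx)`. -/
theorem total_jump_law
    (Lev : Measure ℝ) [SFinite Lev] (θstar lam : ℝ)
    (hθstar : 0 < θstar) (hlam : 0 < lam)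
    (hexp : ∫⁻ x in Set.Ioi (0:ℝ), ENNReal.ofReal (exp (θstar * x)) ∂Lev < ⊤)
    (ℓ : ℝ) (hℓ : 0 ≤ ℓ) :
    ∫⁻ v in Set.Ioi (0:ℝ),
        ENNReal.ofReal (θstar / lam * exp (θstar * v)) * Lev (Set.Ioi v ∩ Set.Ioi ℓ)
      = ENNReal.ofReal (1 / lam)
          * ∫⁻ x in Set.Ioi ℓ, ENNReal.ofReal (exp (θstar * x) - 1) ∂Lev :=
  total_jump_law_general Lev θstar lam hθstar ℓ
end
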